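/- arXiv:0704.0994 — 2 statements merged into one kernel-verified Lean document; each statement's English description precedes it below -/
import Mathlib

section
/- In a medium, if m and n are two concise messages transforming a state P, then Pm = Pn if and only if the contents (sets of tokens) of m and n are equal. -/
variable {S : Type*}

/-- Result of applying message `m` (a list of tokens) to state `P`. -/
def mApply (m : List (S → S)) (P : S) : S := m.foldl (fun s τ => τ s) P

/-- `τ'` is a reverse of `τ`. -/
def IsReverse (τ τ' : S → S) : Prop := ∀ P Q : S, P ≠ Q → (τ P = Q ↔ τ' Q = P)

/-- `(S, T)` is a token system. -/
def IsTokenSystem (T : Set (S → S)) : Prop :=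
  Nontrivial S ∧ T.Nonempty ∧ ∀ τ ∈ T, τ ≠ id

/-- `m` is a message of the token system with token set `T`. -/
def IsMsg (T : Set (S → S)) (m : List (S → S)) : Prop := ∀ τ ∈ m, τ ∈ T

/-- `m` is stepwise effective for `P`. -/
def StepwiseEff : List (S → S) → S → Prop
  | [], _ => True
  | τ :: rest, P => τ P ≠ P ∧ StepwiseEff rest (τ P)

/-- `m` is consistent: it contains no token together with a reverse of it. -/
def Consistent (m : List (S → S)) : Prop :=
  ∀ τ ∈ m, ∀ τ' ∈ m, ¬ IsReverse τ τ'

/-- `m` is concise for `P`. -/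
def Concise (T : Set (S → S)) (m : List (S → S)) (P : S) : Prop :=
  IsMsg T m ∧ Consistent m ∧ StepwiseEff m P ∧ m.Nodup

/-- `m` is a return message for `P`. -/
def IsReturn (m : List (S → S)) (P : S) : Prop :=
  StepwiseEff m P ∧ mApply m P = P

/-- `m` is vacuous: its indices partition into pairs of mutually reverse tokens. -/
def Vacuous (m : List (S → S)) : Prop :=
  ∃ σ : Equiv.Perm (Fin m.length),
    (∀ i, σ i ≠ i) ∧ (∀ i, σ (σ i) = i) ∧
    ∀ i, IsReverse (m.get i) (m.get (σ i))

/-- `(S, T)` is a medium: token system satisfying [Ma] and [Mb]. -/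
def IsMedium (T : Set (S → S)) : Prop :=
  IsTokenSystem T ∧
  (∀ P Q : S, P ≠ Q → ∃ m, Concise T m P ∧ mApply m P = Q) ∧
  (∀ (m : List (S → S)) (P : S), IsMsg T m → IsReturn m P → Vacuous m)

/-- Content of a message: its set of tokens. -/
def msgContent (m : List (S → S)) : Set (S → S) := {τ | τ ∈ m}

/-- Token content of a state `P`. -/
def SContent (T : Set (S → S)) (P : S) : Set (S → S) :=
  {τ | ∃ (V : S) (m : List (S → S)), Concise T m V ∧ mApply m V = P ∧ τ ∈ m}

/-- `mr` is the reverse message `τ̃ₙ…τ̃₁` of `m = τ₁…τₙ`. -/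
def IsReverseOfMsg (m mr : List (S → S)) : Prop :=
  List.Forall₂ (fun τ τ' => IsReverse τ τ' ∧ IsReverse τ' τ) m mr.reverse

/-!
Both directions come from one counting identity. In a vacuous message the involution pairing
each token with a reverse matches the occurrences of a token `a` bijectively with those of its
reverse `b`, so `a` and `b` occur equally often. If `l` and `n` are stepwise effective for `P`
with `Pl = Pn`, then `l` followed by the reverse of `n` is a return message, hence vacuous
by [Mb], and counting gives
`count a l + count b n = count b l + count a n`.

If `Pm = Pn` and `τ ∈ m`, consistency of `m` excludes its reverse from `m`, so the identity
forces `τ ∈ n`. If `C(m) = C(n)` but `Pm ≠ Pn`, take a concise `w` from `Pm` to `Pn` and apply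
the identity to `l = m w`: since `m` and `n` have the same tokens, each once, it says that a
token of `w` and its reverse occur equally often in `w`, contradicting consistency of `w`.
-/

open List

theorem mApply_append (l l' : List (S → S)) (P : S) :
    mApply (l ++ l') P = mApply l' (mApply l P) :=
  foldl_append

theorem stepwiseEff_append {l l' : List (S → S)} {P : S} :
    StepwiseEff (l ++ l') P ↔ StepwiseEff l P ∧ StepwiseEff l' (mApply l P) := by
  induction l generalizing P with
  | nil => simp [StepwiseEff, mApply]
  | cons τ l ih => simp [StepwiseEff, mApply, ih, and_assoc]

theorem IsReverse.symm {τ τ' : S → S} (h : IsReverse τ τ') : IsReverse τ' τ :=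
  fun P Q hPQ => (h Q P hPQ.symm).symm

theorem IsReverse.unique {τ a b : S → S} (ha : IsReverse τ a) (hb : IsReverse τ b) :
    a = b := by
  have key : ∀ {a b : S → S}, IsReverse τ a → IsReverse τ b →
      ∀ Q, a Q ≠ Q → b Q = a Q :=
    fun ha hb Q hQ => (hb _ Q hQ).mp ((ha _ Q hQ).mpr rfl)
  funext Q
  by_cases hQa : a Q = Q
  · by_cases hQb : b Q = Q
    · rw [hQa, hQb]
    · exact key hb ha Q hQb
  · exact (key ha hb Q hQa).symm

theorem IsReverse.unique_left {τ a b : S → S} (ha : IsReverse a τ) (hb : IsReverse b τ) :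
    a = b :=
  ha.symm.unique hb.symm

theorem Consistent.count_eq_zero [DecidableEq (S → S)] {l : List (S → S)} (hl : Consistent l)
    {τ τ' : S → S} (hτ : τ ∈ l) (hττ' : IsReverse τ τ') : l.count τ' = 0 :=
  List.count_eq_zero.mpr fun hτ' => hl τ hτ τ' hτ' hττ'

theorem Vacuous.count_eq [DecidableEq (S → S)] {l : List (S → S)} (hl : Vacuous l)
    {a b : S → S} (hab : IsReverse a b) : l.count a = l.count b := by
  obtain ⟨σ, -, hσσ, hσ⟩ := hl
  have partner : ∀ {x y : S → S}, IsReverse x y → ∀ i, l.get i = x → l.get (σ i) = y :=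
    fun hxy i hi => (hi ▸ hσ i).unique hxy
  let e : {i // l.get i = a} ≃ {i // l.get i = b} :=
    { toFun := fun i => ⟨σ i, partner hab i i.2⟩
      invFun := fun j => ⟨σ j, partner hab.symm j j.2⟩
      left_inv := fun i => Subtype.ext (hσσ i)
      right_inv := fun j => Subtype.ext (hσσ j) }
  have hcard : ∀ x, l.count x = Fintype.card {i // l.get i = x} := fun x => by
    rw [Fintype.card_subtype]
    exact (Fin.card_filter_univ_eq_vector_get_eq_count x ⟨l, rfl⟩).symm
  rw [hcard, hcard]
  exact Fintype.card_congr e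

theorem count_eq_count_of_forall₂_isReverse [DecidableEq (S → S)] {l r : List (S → S)}
    (h : Forall₂ IsReverse l r) {a b : S → S} (hab : IsReverse a b) :
    r.count b = l.count a := by
  induction h with
  | nil => rfl
  | @cons x y l r hxy _ ih =>
    have hyx : (y == b) = (x == a) := by
      rw [Bool.eq_iff_iff, beq_iff_eq, beq_iff_eq]
      exact ⟨fun h => (h ▸ hxy).unique_left hab, fun h => (h ▸ hxy).unique hab⟩
    rw [count_cons, count_cons, ih, hyx]

theorem stepwiseEff_and_mApply_reverse_of_forall₂ {l r : List (S → S)}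
    (h : Forall₂ IsReverse l r) {P : S} (hl : StepwiseEff l P) :
    StepwiseEff r.reverse (mApply l P) ∧ mApply r.reverse (mApply l P) = P := by
  induction h generalizing P with
  | nil => exact ⟨trivial, rfl⟩
  | @cons x y l r hxy _ ih =>
    obtain ⟨hxP, hl⟩ := hl
    obtain ⟨hr, hrP⟩ := ih hl
    have hyx : y (x P) = P := (hxy P (x P) (Ne.symm hxP)).mp rfl
    have hxl : mApply (x :: l) P = mApply l (x P) := rfl
    rw [hxl, reverse_cons, stepwiseEff_append, mApply_append, hrP]
    exact ⟨⟨hr, by rw [hyx]; exact Ne.symm hxP, trivial⟩, hyx⟩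

namespace IsMedium

variable {T : Set (S → S)}

theorem exists_reverse (hM : IsMedium T) {τ : S → S} (hτ : τ ∈ T) :
    ∃ τ' ∈ T, IsReverse τ τ' := by
  obtain ⟨⟨-, -, hid⟩, hMa, hMb⟩ := hM
  obtain ⟨P, hP⟩ : ∃ P, τ P ≠ P := by
    by_contra! h
    exact hid τ hτ (funext h)
  obtain ⟨w, ⟨hwT, -, hwP, -⟩, hw⟩ := hMa (τ P) P hP
  have hT : IsMsg T (τ :: w) := forall_mem_cons.mpr ⟨hτ, hwT⟩
  obtain ⟨σ, -, -, hσ⟩ := hMb (τ :: w) P hT ⟨⟨hP, hwP⟩, hw⟩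
  exact ⟨_, hT _ (get_mem _ _), hσ ⟨0, Nat.succ_pos _⟩⟩

theorem exists_forall₂_isReverse (hM : IsMedium T) {l : List (S → S)} (hl : IsMsg T l) :
    ∃ r, IsMsg T r ∧ Forall₂ IsReverse l r := by
  induction l with
  | nil => exact ⟨[], fun _ h => absurd h not_mem_nil, .nil⟩
  | cons τ l ih =>
    obtain ⟨hτ, hl⟩ := forall_mem_cons.mp hl
    obtain ⟨r, hrT, hr⟩ := ih hl
    obtain ⟨τ', hτ'T, hττ'⟩ := hM.exists_reverse hτ
    exact ⟨τ' :: r, forall_mem_cons.mpr ⟨hτ'T, hrT⟩, .cons hττ' hr⟩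

theorem count_add_count_eq_of_mApply_eq [DecidableEq (S → S)] (hM : IsMedium T)
    {l n : List (S → S)} {P : S} (hlT : IsMsg T l) (hlP : StepwiseEff l P) (hnT : IsMsg T n)
    (hnP : StepwiseEff n P) (h : mApply l P = mApply n P) {a b : S → S}
    (hab : IsReverse a b) : l.count a + n.count b = l.count b + n.count a := by
  obtain ⟨r, hrT, hr⟩ := hM.exists_forall₂_isReverse hnT
  obtain ⟨hrP, hrn⟩ := stepwiseEff_and_mApply_reverse_of_forall₂ hr hnP
  have hT : IsMsg T (l ++ r.reverse) := fun τ hτ =>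
    (mem_append.mp hτ).elim (hlT τ) fun hτ => hrT τ (mem_reverse.mp hτ)
  have hret : IsReturn (l ++ r.reverse) P :=
    ⟨stepwiseEff_append.mpr ⟨hlP, h ▸ hrP⟩, by rw [mApply_append, h, hrn]⟩
  have hcount := (hM.2.2 _ P hT hret).count_eq hab
  rwa [count_append, count_append, count_reverse, count_reverse,
    count_eq_count_of_forall₂_isReverse hr hab.symm,
    count_eq_count_of_forall₂_isReverse hr hab] at hcount

theorem msgContent_subset_of_mApply_eq (hM : IsMedium T) {l n : List (S → S)} {P : S}
    (hlT : IsMsg T l) (hlc : Consistent l) (hlP : StepwiseEff l P) (hnT : IsMsg T n)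
    (hnP : StepwiseEff n P) (h : mApply l P = mApply n P) :
    msgContent l ⊆ msgContent n := by
  classical
  intro τ (hτ : τ ∈ l)
  obtain ⟨τ', -, hττ'⟩ := hM.exists_reverse (hlT τ hτ)
  have hcount := hM.count_add_count_eq_of_mApply_eq hlT hlP hnT hnP h hττ'
  rw [hlc.count_eq_zero hτ hττ'] at hcount
  have hτl := count_pos_iff.mpr hτ
  exact count_pos_iff.mp (by omega : 0 < n.count τ)

theorem mApply_eq_of_msgContent_eq (hM : IsMedium T) {m n : List (S → S)} {P : S}
    (hmT : IsMsg T m) (hmP : StepwiseEff m P) (hmd : m.Nodup) (hnT : IsMsg T n)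
    (hnP : StepwiseEff n P) (hnd : n.Nodup) (h : msgContent m = msgContent n) :
    mApply m P = mApply n P := by
  classical
  by_contra hne
  obtain ⟨w, ⟨hwT, hwc, hwP, -⟩, hw⟩ := hM.2.1 _ _ hne
  obtain ⟨τ, hτ⟩ := exists_mem_of_ne_nil w (by rintro rfl; exact hne hw)
  obtain ⟨τ', -, hττ'⟩ := hM.exists_reverse (hwT τ hτ)
  have hmn : ∀ x, m.count x = n.count x := fun x => by
    have hx : x ∈ m ↔ x ∈ n := Set.ext_iff.mp h x
    by_cases hxm : x ∈ m
    · rw [count_eq_one_of_mem hmd hxm, count_eq_one_of_mem hnd (hx.mp hxm)]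
    · rw [count_eq_zero_of_not_mem hxm, count_eq_zero_of_not_mem (mt hx.mpr hxm)]
  have hcount := hM.count_add_count_eq_of_mApply_eq (l := m ++ w)
    (fun x hx => (mem_append.mp hx).elim (hmT x) (hwT x))
    (stepwiseEff_append.mpr ⟨hmP, hwP⟩) hnT hnP (by rw [mApply_append, hw]) hττ'
  rw [count_append, count_append, hmn, hmn, hwc.count_eq_zero hτ hττ'] at hcount
  have hτw := count_pos_iff.mpr hτ
  omega

end IsMedium

/-- Two concise messages transforming a state `P` produce the same state
iff they have the same content. -/
theorem stmt3 {T : Set (S → S)} (hM : IsMedium T) (P : S)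
    (m n : List (S → S)) (hm : Concise T m P) (hn : Concise T n P) :
    mApply m P = mApply n P ↔ msgContent m = msgContent n := by
  obtain ⟨hmT, hmc, hmP, hmd⟩ := hm
  obtain ⟨hnT, hnc, hnP, hnd⟩ := hn
  refine ⟨fun h => ?_, hM.mApply_eq_of_msgContent_eq hmT hmP hmd hnT hnP hnd⟩
  exact (hM.msgContent_subset_of_mApply_eq hmT hmc hmP hnT hnP h).antisymm
    (hM.msgContent_subset_of_mApply_eq hnT hnc hnP hmT hmP h.symm)
end

section
/- The graph of any medium is bipartite (equivalently, every circuit in it is even). -/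
variable {S : Type*}

/-- The graph of a medium: states are vertices, token-adjacent states are joined. -/
def mediumGraph (T : Set (S → S)) : SimpleGraph S where
  Adj P Q := P ≠ Q ∧ ∃ τ ∈ T, τ P = Q ∨ τ Q = P
  symm := by
    constructor
    rintro P Q ⟨h, τ, hτ, hor⟩
    exact ⟨h.symm, τ, hτ, hor.symm⟩
  loopless := by
    constructor
    rintro P ⟨h, -⟩
    exact h rfl

variable {V : Type*}

/-- The like relation on arcs of a graph:
`ab L cd` iff `d(a,c) + 1 = d(b,d) + 1 = d(a,d) = d(b,c)`. -/
def Like (G : SimpleGraph V) (a b c d : V) : Prop :=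
  G.Adj a b ∧ G.Adj c d ∧
    G.dist a c + 1 = G.dist b d + 1 ∧ G.dist b d + 1 = G.dist a d ∧
    G.dist a d = G.dist b c

/-- A graph is mediatic if it is connected, bipartite, and its like relation is transitive. -/
def IsMediatic (G : SimpleGraph V) : Prop :=
  G.Connected ∧ G.Colorable 2 ∧
    ∀ a b c d e f : V, Like G a b c d → Like G c d e f → Like G a b e f

/-!
A closed walk in the graph of a medium can be read as a return message: each edge `P — Q` is
traversed by some token sending `P` to `Q` (a reverse of the token joining them if necessary).
By [Mb] that message is vacuous, so its tokens pair off and the walk has even length. A graph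
without odd closed walks is bipartite.
-/

section Medium

variable {T : Set (S → S)}

theorem Vacuous.even_length {m : List (S → S)} (h : Vacuous m) : Even m.length := by
  obtain ⟨σ, hfix, hinv, -⟩ := h
  have hsq : σ ^ 2 = 1 := Equiv.ext hinv
  have hsupp : σ.support = Finset.univ :=
    Finset.eq_univ_of_forall fun i => Equiv.Perm.mem_support.2 (hfix i)
  simpa [hsupp, even_iff_two_dvd] using Equiv.Perm.two_dvd_card_support hsq

theorem IsMedium.exists_reverse_s14 (hM : IsMedium T) {τ : S → S} (hτ : τ ∈ T) :
    ∃ τ' ∈ T, IsReverse τ τ' := by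
  obtain ⟨P, hP⟩ : ∃ P, τ P ≠ P := by
    by_contra! h
    exact hM.1.2.2 τ hτ (funext h)
  obtain ⟨m, ⟨hmsg, -, hse, -⟩, happ⟩ := hM.2.1 (τ P) P hP
  have hmsg' : IsMsg T (τ :: m) := List.forall_mem_cons.2 ⟨hτ, hmsg⟩
  -- `τ` followed by a way back to `P` is a return message, whose pairing matches `τ` with a reverse.
  obtain ⟨σ, -, -, hrev⟩ := hM.2.2 (τ :: m) P hmsg' ⟨⟨hP, hse⟩, happ⟩
  let i₀ : Fin (τ :: m).length := ⟨0, Nat.succ_pos _⟩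
  exact ⟨(τ :: m).get (σ i₀), hmsg' _ (List.get_mem _ _), hrev i₀⟩

theorem IsMedium.exists_token_of_adj (hM : IsMedium T) {P Q : S}
    (h : (mediumGraph T).Adj P Q) : ∃ τ ∈ T, τ P = Q := by
  obtain ⟨hPQ, τ, hτ, hτPQ | hτQP⟩ := h
  · exact ⟨τ, hτ, hτPQ⟩
  · obtain ⟨τ', hτ', hrev⟩ := hM.exists_reverse_s14 hτ
    exact ⟨τ', hτ', (hrev Q P hPQ.symm).1 hτQP⟩

theorem IsMedium.exists_msg_of_walk (hM : IsMedium T) {P Q : S}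
    (w : (mediumGraph T).Walk P Q) :
    ∃ m, IsMsg T m ∧ StepwiseEff m P ∧ mApply m P = Q ∧ m.length = w.length := by
  induction w with
  | nil => exact ⟨[], List.forall_mem_nil _, trivial, rfl, rfl⟩
  | cons hadj _ ih =>
    obtain ⟨m, hmsg, hse, happ, hlen⟩ := ih
    obtain ⟨τ, hτ, rfl⟩ := hM.exists_token_of_adj hadj
    exact ⟨τ :: m, List.forall_mem_cons.2 ⟨hτ, hmsg⟩, ⟨hadj.ne.symm, hse⟩, happ,
      by simp [hlen]⟩

end Medium

/-- The graph of any medium is bipartite (2-colorable). -/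
theorem stmt14 {T : Set (S → S)} (hM : IsMedium T) :
    (mediumGraph T).Colorable 2 := by
  refine SimpleGraph.two_colorable_iff_forall_loop_even.2 fun P w => ?_
  obtain ⟨m, hmsg, hse, happ, hlen⟩ := hM.exists_msg_of_walk w
  exact hlen ▸ (hM.2.2 m P hmsg ⟨hse, happ⟩).even_length
end
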